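/- For any p ∈ (0, ∞), a vector x ∈ ℝⁿ satisfies x ∈ {0,1}ⁿ if and only if x ∈ [0,1]ⁿ and ‖x − (1/2)·𝟏ₙ‖ₚᵖ = n/2ᵖ, i.e., ∑ᵢ |xᵢ − 1/2|ᵖ = n/2ᵖ. -/

import Mathlib

open Finset

lemma abs_sub_half_le_half {t : ℝ} (h0 : 0 ≤ t) (h1 : t ≤ 1) : |t - 1 / 2| ≤ 1 / 2 :=
  abs_le.2 ⟨by linarith, by linarith⟩

lemma abs_sub_half_eq_half_iff {t : ℝ} : |t - 1 / 2| = 1 / 2 ↔ t = 0 ∨ t = 1 := by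
  rw [abs_eq (by norm_num)]
  constructor <;> rintro (h | h) <;> [right; left; right; left] <;> linarith

lemma abs_sub_half_rpow_eq_iff {p t : ℝ} (hp : p ≠ 0) :
    |t - 1 / 2| ^ p = (1 / 2 : ℝ) ^ p ↔ t = 0 ∨ t = 1 := by
  rw [← abs_sub_half_eq_half_iff]
  exact (Real.rpow_left_injOn hp).eq_iff (by simp) (by norm_num)

lemma sum_const_half_rpow (n : ℕ) (p : ℝ) :
    ∑ _i : Fin n, (1 / 2 : ℝ) ^ p = (n : ℝ) / 2 ^ p := by
  rw [sum_const, card_univ, Fintype.card_fin, nsmul_eq_mul, Real.div_rpow zero_le_one zero_le_two,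
    Real.one_rpow, mul_one_div]

theorem lp_box_equivalence (n : ℕ) (p : ℝ) (hp : 0 < p) (x : Fin n → ℝ) :
    (∀ i, x i = 0 ∨ x i = 1) ↔
      ((∀ i, 0 ≤ x i ∧ x i ≤ 1) ∧
        ∑ i, |x i - 1 / 2| ^ p = (n : ℝ) / 2 ^ p) := by
  rw [← sum_const_half_rpow n p]
  constructor
  · intro hx
    refine ⟨fun i => by rcases hx i with h | h <;> simp [h], sum_congr rfl fun i _ => ?_⟩
    exact (abs_sub_half_rpow_eq_iff hp.ne').2 (hx i)
  · rintro ⟨hbox, hsum⟩ i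
    -- each term is at most (1/2)^p, so equality of the sums forces equality termwise
    have hle : ∀ j ∈ univ, |x j - 1 / 2| ^ p ≤ (1 / 2 : ℝ) ^ p := fun j _ =>
      Real.rpow_le_rpow (abs_nonneg _) (abs_sub_half_le_half (hbox j).1 (hbox j).2) hp.le
    exact (abs_sub_half_rpow_eq_iff hp.ne').1 ((sum_eq_sum_iff_of_le hle).1 hsum i (mem_univ i))
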